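/- (Sanov consequence for tests on types, inequality (15) in the fixed-weight converse.) Let P₁ be a full-support distribution on a finite alphabet 𝒳 and fix λ > 2δ > 0. For each n, let g_n : Δ_n → [0,1] and define E_n = Σ_{q ∈ Δ_n} (1 − g_n(q)) · P_{X^n∼P₁^n}(P_{X^n} = q). Suppose there exists N such that for all n > N, −(1/n) log E_n ≥ λ − δ. Then for all sufficiently large n, every type q ∈ B_KL(P₁, λ−2δ) ∩ Δ_n satisfies 1 − g_n(q) ≤ 2^{−nδ/2}. -/

import Mathlib

open scoped BigOperators ENNReal Classical
open Filter

noncomputable section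

/-- The set of probability distributions on a finite alphabet. -/
def simplex (𝒳 : Type*) [Fintype 𝒳] : Set (𝒳 → ℝ) :=
  {p | (∀ x, 0 ≤ p x) ∧ ∑ x, p x = 1}

/-- Kullback–Leibler divergence, with values in `[0,∞]`. -/
def KL {𝒳 : Type*} [Fintype 𝒳] (p q : 𝒳 → ℝ) : ℝ≥0∞ :=
  if ∀ x, q x = 0 → p x = 0 then
    ENNReal.ofReal (∑ x, p x * Real.log (p x / q x))
  else ⊤

/-- KL ball of radius `r` around `p`. -/
def BKL {𝒳 : Type*} [Fintype 𝒳] (p : 𝒳 → ℝ) (r : ℝ) : Set (𝒳 → ℝ) :=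
  {q | q ∈ simplex 𝒳 ∧ KL q p ≤ ENNReal.ofReal r}

/-- Mixture `(1-a) p + a q`. -/
def mix {𝒳 : Type*} (a : ℝ) (p q : 𝒳 → ℝ) : 𝒳 → ℝ :=
  fun x => (1 - a) * p x + a * q x

/-- Binary KL divergence `D₂(ρ‖ε)`. -/
def D2 (ρ ε : ℝ) : ℝ≥0∞ :=
  KL (fun b : Bool => if b then ρ else 1 - ρ) (fun b : Bool => if b then ε else 1 - ε)

/-- Total variation distance. -/
def dTV {𝒳 : Type*} [Fintype 𝒳] (p q : 𝒳 → ℝ) : ℝ :=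
  (∑ x, |p x - q x|) / 2

/-- Empirical type of a string. -/
def typeOf {𝒳 : Type*} [Fintype 𝒳] [DecidableEq 𝒳] {n : ℕ} (x : Fin n → 𝒳) : 𝒳 → ℝ :=
  fun a => ((Finset.univ.filter fun i => x i = a).card : ℝ) / n

/-- i.i.d. probability of a string. -/
def iid {𝒳 : Type*} [Fintype 𝒳] (P : 𝒳 → ℝ) {n : ℕ} (x : Fin n → 𝒳) : ℝ :=
  ∏ i, P (x i)

/-- Probability of `z` under i.i.d. Bernoulli(ε). -/
def berW (ε : ℝ) {n : ℕ} (z : Fin n → Bool) : ℝ :=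
  ∏ i, if z i then ε else 1 - ε

/-- Hamming weight. -/
def wt {n : ℕ} (z : Fin n → Bool) : ℕ :=
  (Finset.univ.filter fun i => z i = true).card

/-- Probability of `z` under the uniform distribution on weight-⌈nε⌉ binary vectors. -/
def unifW (ε : ℝ) {n : ℕ} (z : Fin n → Bool) : ℝ :=
  if wt z = Nat.ceil ((n : ℝ) * ε) then
    (1 : ℝ) / ((Finset.univ.filter fun z' : Fin n → Bool => wt z' = Nat.ceil ((n : ℝ) * ε)).card : ℝ)
  else 0

/-- `liminf -(1/n) log E(n) ≥ l` (in the extended reals). -/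
def ExpLB (E : ℕ → ℝ) (l : ℝ) : Prop :=
  (l : EReal) ≤ Filter.liminf (fun n : ℕ => ((-(Real.log (E n)) / n : ℝ) : EReal)) Filter.atTop

/-- Kullback–Leibler divergence in bits (base-2 logarithm), with values in `[0,∞]`. -/
def KL2 {𝒳 : Type*} [Fintype 𝒳] (p q : 𝒳 → ℝ) : ℝ≥0∞ :=
  if ∀ x, q x = 0 → p x = 0 then
    ENNReal.ofReal (∑ x, p x * Real.logb 2 (p x / q x))
  else ⊤

/-!
A string `x` of type `q` with letter counts `kₐ` lies in a type class of at least
`n! / ∏ₐ kₐ!` strings (the orbit of `x` under permutations of coordinates, whose stabiliser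
has order `∏ₐ kₐ!`). With Stirling's bounds `n! ≥ (n/e)ⁿ` and `k! ≤ e (k+1) (k/e)^k`, this makes
the `P₁ⁿ`-probability of the class at least `(e(n+1))^{-|𝒳|} 2^{-n D(q‖P₁)}`. As `1 - g_n` is
constant on the class, `(1 - g_n(q))` times that probability is at most `E_n ≤ 2^{-n(λ-δ)}`, so
`D(q‖P₁) ≤ λ - 2δ` gives `1 - g_n(q) ≤ (e(n+1))^{|𝒳|} 2^{-nδ}`, and the polynomial factor is
eventually below `2^{nδ/2}`.
-/

open Finset Real Nat

theorem factorial_le_exp_one_mul_succ_mul_div_exp_pow (k : ℕ) :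
    (k ! : ℝ) ≤ exp 1 * (k + 1) * (k / exp 1) ^ k := by
  rcases Nat.eq_zero_or_pos k with rfl | hk
  · simp [one_le_exp zero_le_one]
  have hseq : Stirling.stirlingSeq k ≤ exp 1 / √2 := by
    obtain ⟨j, rfl⟩ := Nat.exists_eq_add_of_le' hk
    rw [← Stirling.stirlingSeq_one]
    exact Stirling.stirlingSeq'_antitone (Nat.zero_le j)
  have hsqrt : √(2 * (k : ℝ)) ≤ √2 * (k + 1) := by
    rw [sqrt_mul zero_le_two]
    gcongr
    rw [sqrt_le_iff]
    constructor <;> nlinarith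
  have hden : 0 < √(2 * (k : ℝ)) * (k / exp 1) ^ k := by positivity
  calc (k ! : ℝ) = Stirling.stirlingSeq k * (√(2 * (k : ℝ)) * (k / exp 1) ^ k) := by
        rw [Stirling.stirlingSeq, div_mul_cancel₀ _ hden.ne']
    _ ≤ exp 1 / √2 * (√2 * (k + 1) * (k / exp 1) ^ k) := by gcongr
    _ = exp 1 * (k + 1) * (k / exp 1) ^ k := by field_simp

theorem rpow_neg_mul_logb_div_mul_pow {b c : ℝ} (hb : 0 < b) (hb1 : b ≠ 1) (hc : 0 < c) (k : ℕ) :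
    b ^ (-(k * logb b (k / c))) * (k : ℝ) ^ k = c ^ k := by
  rcases Nat.eq_zero_or_pos k with rfl | hk
  · simp
  have hkc : 0 < (k : ℝ) / c := by positivity
  rw [show -(k * logb b (k / c)) = logb b (k / c) * -k by ring, rpow_mul hb.le,
    rpow_logb hb hb1 hkc, rpow_neg hkc.le, rpow_natCast, div_pow]
  field_simp

theorem eventually_mul_succ_pow_le_pow (c : ℝ) (m : ℕ) {r : ℝ} (hr : 1 < r) :
    ∀ᶠ n : ℕ in atTop, (c * (n + 1)) ^ m ≤ r ^ n := by
  have hshift : Tendsto (fun n : ℕ => c ^ m * r * (((n + 1 : ℕ) : ℝ) ^ m / r ^ (n + 1)))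
      atTop (nhds 0) := by
    simpa using ((tendsto_pow_const_div_const_pow_of_one_lt m hr).comp
      (tendsto_add_atTop_nat 1)).const_mul (c ^ m * r)
  filter_upwards [hshift.eventually (ge_mem_nhds one_pos)] with n hn
  have hrn : 0 < r ^ n := pow_pos (zero_lt_one.trans hr) n
  rw [← div_le_one hrn]
  convert hn using 1
  push_cast
  rw [mul_pow, pow_succ]
  field_simp

def klBits {𝒳 : Type*} [Fintype 𝒳] (p q : 𝒳 → ℝ) : ℝ :=
  ∑ a, p a * logb 2 (p a / q a)

theorem KL2_eq_ofReal_klBits {𝒳 : Type*} [Fintype 𝒳] {p q : 𝒳 → ℝ} (hq : ∀ a, 0 < q a) :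
    KL2 p q = ENNReal.ofReal (klBits p q) :=
  if_pos fun a h => absurd h (hq a).ne'

namespace MethodOfTypes

variable {𝒳 : Type*} [DecidableEq 𝒳] {n : ℕ}

def count (x : Fin n → 𝒳) (a : 𝒳) : ℕ :=
  (univ.filter fun i => x i = a).card

theorem count_comp_perm (x : Fin n → 𝒳) (σ : Equiv.Perm (Fin n)) :
    count (x ∘ σ) = count x := by
  funext a
  simp only [count, ← Fintype.card_subtype]
  exact Fintype.card_congr (σ.subtypeEquiv fun _ => Iff.rfl)

theorem count_le (x : Fin n → 𝒳) (a : 𝒳) : count x a ≤ n :=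
  (card_filter_le _ _).trans_eq (card_fin n)

variable [Fintype 𝒳]

def typeClass (x : Fin n → 𝒳) : Finset (Fin n → 𝒳) :=
  univ.filter fun y => count y = count x

theorem typeOf_apply (x : Fin n → 𝒳) (a : 𝒳) : typeOf x a = count x a / n := rfl

theorem typeOf_eq_of_mem_typeClass {x y : Fin n → 𝒳} (hy : y ∈ typeClass x) :
    typeOf y = typeOf x := by
  funext a
  rw [typeOf_apply, typeOf_apply, (mem_filter.1 hy).2]

theorem sum_count (x : Fin n → 𝒳) : ∑ a, count x a = n := by
  simpa [count] using
    (card_eq_sum_card_fiberwise (f := x) (s := univ) (t := univ) fun i _ => mem_univ _).symm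

theorem iid_eq_prod_pow_count (P : 𝒳 → ℝ) (x : Fin n → 𝒳) :
    iid P x = ∏ a, P a ^ count x a := by
  rw [iid, ← prod_fiberwise_of_maps_to (g := x) (t := univ) fun i _ => mem_univ _]
  refine prod_congr rfl fun a _ => ?_
  rw [prod_congr rfl fun i hi => congrArg P (mem_filter.1 hi).2, prod_const, count]

theorem sum_typeClass_iid (P : 𝒳 → ℝ) (x : Fin n → 𝒳) :
    ∑ y ∈ typeClass x, iid P y = (typeClass x).card * iid P x := by
  rw [sum_congr rfl fun y hy => by rw [iid_eq_prod_pow_count, (mem_filter.1 hy).2,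
    ← iid_eq_prod_pow_count], sum_const, nsmul_eq_mul]

theorem factorial_le_card_typeClass_mul (x : Fin n → 𝒳) :
    n ! ≤ (typeClass x).card * ∏ a, (count x a)! := by
  have hstab : Fintype.card {σ : Equiv.Perm (Fin n) // x ∘ σ = x} = ∏ a, (count x a)! := by
    rw [DomMulAct.stabilizer_card]; simp only [count, Fintype.card_subtype]
  have hfiber : ∀ y ∈ univ.image fun σ : Equiv.Perm (Fin n) => x ∘ σ,
      (univ.filter fun σ : Equiv.Perm (Fin n) => x ∘ σ = y).card ≤ ∏ a, (count x a)! := by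
    intro y hy
    obtain ⟨τ, -, rfl⟩ := mem_image.1 hy
    rw [← hstab, ← Fintype.card_subtype]
    refine (Fintype.card_congr (Equiv.subtypeEquiv (Equiv.mulRight τ⁻¹) fun σ => ?_)).le
    simp only [Equiv.coe_mulRight, Equiv.Perm.coe_mul, Equiv.Perm.inv_def, ← Function.comp_assoc,
      Equiv.comp_symm_eq]
  have himage : univ.image (fun σ : Equiv.Perm (Fin n) => x ∘ σ) ⊆ typeClass x := by
    intro y hy
    obtain ⟨σ, -, rfl⟩ := mem_image.1 hy
    exact mem_filter.2 ⟨mem_univ _, count_comp_perm x σ⟩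
  calc
    n ! = (univ : Finset (Equiv.Perm (Fin n))).card := by
      rw [Finset.card_univ, Fintype.card_perm, Fintype.card_fin]
    -- the fibres of `σ ↦ x ∘ σ` are cosets of the stabiliser of `x`
    _ ≤ (∏ a, (count x a)!) * (univ.image fun σ : Equiv.Perm (Fin n) => x ∘ σ).card :=
      card_le_mul_card_image _ _ hfiber
    _ ≤ (typeClass x).card * ∏ a, (count x a)! := by
      rw [mul_comm]; exact Nat.mul_le_mul_right _ (card_le_card himage)

theorem pow_le_card_typeClass_mul (x : Fin n → 𝒳) :
    (n : ℝ) ^ n ≤ (exp 1 * (n + 1)) ^ Fintype.card 𝒳 * (typeClass x).card *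
      ∏ a, (count x a : ℝ) ^ count x a := by
  have hfact : ∀ a, ((count x a)! : ℝ) ≤
      exp 1 * (n + 1) * ((count x a : ℝ) ^ count x a / exp 1 ^ count x a) := by
    intro a
    rw [← div_pow]
    refine (factorial_le_exp_one_mul_succ_mul_div_exp_pow _).trans ?_
    gcongr
    exact_mod_cast count_le x a
  have hprod : ∏ a, ((count x a)! : ℝ) ≤
      (exp 1 * (n + 1)) ^ Fintype.card 𝒳 * (∏ a, (count x a : ℝ) ^ count x a) / exp 1 ^ n := by
    refine (prod_le_prod (fun a _ => by positivity) fun a _ => hfact a).trans_eq ?_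
    rw [prod_mul_distrib, prod_div_distrib, prod_pow_eq_pow_sum, sum_count, prod_const,
      Finset.card_univ, mul_div_assoc]
  calc (n : ℝ) ^ n ≤ n ! * exp 1 ^ n := by
        rw [← div_le_iff₀' (by positivity), ← exp_nat_mul, mul_one]
        exact pow_div_factorial_le_exp _ n.cast_nonneg n
    _ ≤ (typeClass x).card * (∏ a, ((count x a)! : ℝ)) * exp 1 ^ n := by
        gcongr
        exact_mod_cast factorial_le_card_typeClass_mul x
    _ ≤ (typeClass x).card * ((exp 1 * (n + 1)) ^ Fintype.card 𝒳 *
          (∏ a, (count x a : ℝ) ^ count x a) / exp 1 ^ n) * exp 1 ^ n := by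
        gcongr
    _ = _ := by field_simp

theorem two_rpow_neg_mul_klBits_mul_prod_pow_count (P : 𝒳 → ℝ) (hP : ∀ a, 0 < P a) (x : Fin n → 𝒳) :
    (2 : ℝ) ^ (-(n : ℝ) * klBits (typeOf x) P) * ∏ a, (count x a : ℝ) ^ count x a =
      (n : ℝ) ^ n * iid P x := by
  rcases Nat.eq_zero_or_pos n with rfl | hn
  · simp [count, iid]
  have hexp : -(n : ℝ) * klBits (typeOf x) P =
      ∑ a, -(count x a * logb 2 (count x a / (n * P a))) := by
    rw [klBits, mul_sum]
    refine sum_congr rfl fun a _ => ?_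
    rw [typeOf_apply, div_div]
    field_simp
  rw [hexp, rpow_sum_of_pos two_pos, ← prod_mul_distrib,
    prod_congr rfl fun a _ => rpow_neg_mul_logb_div_mul_pow two_pos (by norm_num)
      (mul_pos (Nat.cast_pos.2 hn) (hP a)) _,
    iid_eq_prod_pow_count]
  simp only [mul_pow, prod_mul_distrib, prod_pow_eq_pow_sum, sum_count]

theorem two_rpow_neg_mul_klBits_le (P : 𝒳 → ℝ) (hP : ∀ a, 0 < P a) (x : Fin n → 𝒳) :
    (2 : ℝ) ^ (-(n : ℝ) * klBits (typeOf x) P) ≤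
      (exp 1 * (n + 1)) ^ Fintype.card 𝒳 * ∑ y ∈ typeClass x, iid P y := by
  have hW : 0 < ∏ a, (count x a : ℝ) ^ count x a :=
    prod_pos fun a _ => by exact_mod_cast Nat.pow_self_pos
  refine le_of_mul_le_mul_right ?_ hW
  rw [two_rpow_neg_mul_klBits_mul_prod_pow_count P hP, sum_typeClass_iid]
  calc (n : ℝ) ^ n * iid P x
      ≤ (exp 1 * (n + 1)) ^ Fintype.card 𝒳 * (typeClass x).card *
          (∏ a, (count x a : ℝ) ^ count x a) * iid P x := by
        gcongr
        · exact prod_nonneg fun i _ => (hP _).le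
        · exact pow_le_card_typeClass_mul x
    _ = _ := by ring

theorem one_sub_mul_sum_typeClass_le (P : 𝒳 → ℝ) (hP : ∀ a, 0 ≤ P a) (g : (𝒳 → ℝ) → ℝ)
    (hg : ∀ y : Fin n → 𝒳, g (typeOf y) ≤ 1) (x : Fin n → 𝒳) :
    (1 - g (typeOf x)) * ∑ y ∈ typeClass x, iid P y ≤
      ∑ y : Fin n → 𝒳, iid P y * (1 - g (typeOf y)) := by
  rw [mul_sum]
  calc ∑ y ∈ typeClass x, (1 - g (typeOf x)) * iid P y
      = ∑ y ∈ typeClass x, iid P y * (1 - g (typeOf y)) :=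
        sum_congr rfl fun y hy => by rw [typeOf_eq_of_mem_typeClass hy, mul_comm]
    _ ≤ ∑ y : Fin n → 𝒳, iid P y * (1 - g (typeOf y)) :=
        sum_le_sum_of_subset_of_nonneg (subset_univ _) fun y _ _ =>
          mul_nonneg (prod_nonneg fun i _ => hP _) (sub_nonneg.2 (hg y))

theorem one_sub_mul_two_rpow_le (P : 𝒳 → ℝ) (hP : ∀ a, 0 < P a) (g : (𝒳 → ℝ) → ℝ)
    (hg : ∀ y : Fin n → 𝒳, g (typeOf y) ≤ 1) (x : Fin n → 𝒳) :
    (1 - g (typeOf x)) * (2 : ℝ) ^ (-(n : ℝ) * klBits (typeOf x) P) ≤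
      (exp 1 * (n + 1)) ^ Fintype.card 𝒳 * ∑ y : Fin n → 𝒳, iid P y * (1 - g (typeOf y)) :=
  calc (1 - g (typeOf x)) * (2 : ℝ) ^ (-(n : ℝ) * klBits (typeOf x) P)
      ≤ (1 - g (typeOf x)) * ((exp 1 * (n + 1)) ^ Fintype.card 𝒳 * ∑ y ∈ typeClass x, iid P y) :=
        mul_le_mul_of_nonneg_left (two_rpow_neg_mul_klBits_le P hP x) (sub_nonneg.2 (hg x))
    _ = (exp 1 * (n + 1)) ^ Fintype.card 𝒳 * ((1 - g (typeOf x)) * ∑ y ∈ typeClass x, iid P y) := by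
        ring
    _ ≤ _ := by
        gcongr
        exact one_sub_mul_sum_typeClass_le P (fun a => (hP a).le) g hg x

end MethodOfTypes

theorem sanov_test_on_types_general {𝒳 : Type*} [Fintype 𝒳] [DecidableEq 𝒳]
    (P1 : 𝒳 → ℝ) (hfs1 : ∀ x, 0 < P1 x)
    {lam δ : ℝ} (hδ : 0 < δ) (hlam : 2 * δ < lam)
    (g : (n : ℕ) → (𝒳 → ℝ) → ℝ)
    (hg : ∀ (n : ℕ) (x : Fin n → 𝒳), g n (typeOf x) ∈ Set.Icc (0:ℝ) 1)
    (hE : ∃ N : ℕ, ∀ n > N,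
      (∑ x : Fin n → 𝒳, iid P1 x * (1 - g n (typeOf x))) ≤
        (2 : ℝ) ^ (-(n : ℝ) * (lam - δ))) :
    ∃ N' : ℕ, ∀ n > N', ∀ x : Fin n → 𝒳,
      KL2 (typeOf x) P1 ≤ ENNReal.ofReal (lam - 2 * δ) →
        1 - g n (typeOf x) ≤ (2 : ℝ) ^ (-(n : ℝ) * δ / 2) := by
  obtain ⟨N, hN⟩ := hE
  obtain ⟨N₀, hN₀⟩ := eventually_atTop.1 <| eventually_mul_succ_pow_le_pow (exp 1)
    (Fintype.card 𝒳) (one_lt_rpow one_lt_two (half_pos hδ))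
  refine ⟨max N N₀, fun n hn x hx => ?_⟩
  have hD : klBits (typeOf x) P1 ≤ lam - 2 * δ := by
    rwa [KL2_eq_ofReal_klBits hfs1, ENNReal.ofReal_le_ofReal_iff (by linarith)] at hx
  have hpoly : (exp 1 * (n + 1)) ^ Fintype.card 𝒳 ≤ (2 : ℝ) ^ ((n : ℝ) * (δ / 2)) := by
    rw [mul_comm (n : ℝ), rpow_mul zero_le_two, rpow_natCast]
    exact hN₀ n (le_of_max_le_right hn.le)
  calc 1 - g n (typeOf x)
      = (1 - g n (typeOf x)) * 2 ^ (-(n : ℝ) * klBits (typeOf x) P1) *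
          2 ^ ((n : ℝ) * klBits (typeOf x) P1) := by
        rw [mul_assoc, ← rpow_add two_pos]
        simp
    _ ≤ (exp 1 * (n + 1)) ^ Fintype.card 𝒳 * 2 ^ (-(n : ℝ) * (lam - δ)) *
          2 ^ ((n : ℝ) * (lam - 2 * δ)) := by
        gcongr ?_ * ?_
        · exact (MethodOfTypes.one_sub_mul_two_rpow_le P1 hfs1 (g n) (fun y => (hg n y).2) x).trans
            (by gcongr; exact hN n (lt_of_le_of_lt (le_max_left _ _) hn))
        · exact rpow_le_rpow_of_exponent_le one_le_two (by gcongr)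
    _ ≤ 2 ^ ((n : ℝ) * (δ / 2)) * 2 ^ (-(n : ℝ) * (lam - δ)) * 2 ^ ((n : ℝ) * (lam - 2 * δ)) := by
        gcongr
    _ = 2 ^ (-(n : ℝ) * δ / 2) := by
        rw [← rpow_add two_pos, ← rpow_add two_pos]
        ring_nf

/-- **Sanov consequence for tests on types** (inequality (15) in the fixed-weight
converse): if `E_n = Σ_q (1-g_n(q)) P_{P1ⁿ}(type = q)` satisfies `E_n ≤ 2^{-n(λ-δ)}`
for all large `n` (i.e. `-(1/n) log₂ E_n ≥ λ-δ`), then for all large `n` every type of a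
length-`n` string lying in `B_KL(P1, λ-2δ)` satisfies `1 - g_n(q) ≤ 2^{-nδ/2}`. -/
theorem sanov_test_on_types {𝒳 : Type*} [Fintype 𝒳] [DecidableEq 𝒳] [Nonempty 𝒳]
    (P1 : 𝒳 → ℝ) (hP1 : P1 ∈ simplex 𝒳) (hfs1 : ∀ x, 0 < P1 x)
    {lam δ : ℝ} (hδ : 0 < δ) (hlam : 2 * δ < lam)
    (g : (n : ℕ) → (𝒳 → ℝ) → ℝ)
    (hg : ∀ (n : ℕ) (x : Fin n → 𝒳), g n (typeOf x) ∈ Set.Icc (0:ℝ) 1)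
    (hE : ∃ N : ℕ, ∀ n > N,
      (∑ x : Fin n → 𝒳, iid P1 x * (1 - g n (typeOf x))) ≤
        (2 : ℝ) ^ (-(n : ℝ) * (lam - δ))) :
    ∃ N' : ℕ, ∀ n > N', ∀ x : Fin n → 𝒳,
      KL2 (typeOf x) P1 ≤ ENNReal.ofReal (lam - 2 * δ) →
        1 - g n (typeOf x) ≤ (2 : ℝ) ^ (-(n : ℝ) * δ / 2) :=
  sanov_test_on_types_general P1 hfs1 hδ hlam g hg hE

end
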